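/- The Mehler kernel satisfies the Chapman–Kolmogorov (semigroup) identity: for all s, t > 0 and x, y ∈ ℝⁿ, ∫_{ℝⁿ} p_γ(x,z;s) p_γ(z,y;t) dγ(z) = p_γ(x,y;s+t). -/

import Mathlib

open Real MeasureTheory

noncomputable abbrev Euc (n : ℕ) := EuclideanSpace ℝ (Fin n)

/-- The standard Gaussian probability measure on `ℝⁿ`. -/
noncomputable def gaussianMeasure (n : ℕ) : Measure (Euc n) :=
  volume.withDensity fun x =>
    ENNReal.ofReal ((2 * Real.pi) ^ (-(n : ℝ) / 2) * Real.exp (-‖x‖ ^ 2 / 2))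

/-- The Gaussian Mehler kernel `p_γ(x,z;t)`. -/
noncomputable def pker (n : ℕ) (t : ℝ) (x z : Euc n) : ℝ :=
  (1 - Real.exp (-2 * t)) ^ (-(n : ℝ) / 2) *
    Real.exp (-(‖x‖ ^ 2 - 2 * Real.exp t * (inner ℝ x z : ℝ) + ‖z‖ ^ 2) /
      (2 * (Real.exp (2 * t) - 1)))

/-! With `a = e^s` and `b = e^t`, the integrand against the Gaussian density is
`exp (-β‖z‖² + ⟪w, z⟫)` up to a factor free of `z`, where
`β = (a²b² - 1) / (2(a² - 1)(b² - 1))` and `w = a x / (a² - 1) + b y / (b² - 1)`.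
The Gaussian integral `(π / β)^(n/2) exp (‖w‖² / (4β))` is, after completing the square,
the kernel with parameter `ab = e^(s+t)`. -/

open scoped RealInnerProductSpace

section InnerProductSpace

variable {V : Type*} [NormedAddCommGroup V] [InnerProductSpace ℝ V]

theorem integral_rexp_neg_mul_sq_norm_add_inner [FiniteDimensional ℝ V] [MeasurableSpace V]
    [BorelSpace V] {b : ℝ} (hb : 0 < b) (w : V) :
    ∫ v : V, rexp (-b * ‖v‖ ^ 2 + ⟪w, v⟫) =
      (π / b) ^ (Module.finrank ℝ V / 2 : ℝ) * rexp (‖w‖ ^ 2 / (4 * b)) := by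
  have h := GaussianFourier.integral_cexp_neg_mul_sq_norm_add (V := V)
    (show 0 < (b : ℂ).re from hb) 1 w
  simp only [one_mul, one_pow] at h
  rw [← Complex.ofReal_inj, ← integral_complex_ofReal]
  push_cast
  rw [h, Complex.ofReal_cpow (by positivity)]
  push_cast
  rfl

noncomputable def mehlerExponent (a : ℝ) (x z : V) : ℝ :=
  -(‖x‖ ^ 2 - 2 * a * ⟪x, z⟫ + ‖z‖ ^ 2) / (2 * (a ^ 2 - 1))

theorem neg_sq_norm_div_two_add_mehlerExponent_add_mehlerExponent {a b : ℝ}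
    (ha : a ^ 2 ≠ 1) (hb : b ^ 2 ≠ 1) (x y z : V) :
    -‖z‖ ^ 2 / 2 + mehlerExponent a x z + mehlerExponent b z y =
      (-((a ^ 2 * b ^ 2 - 1) / (2 * (a ^ 2 - 1) * (b ^ 2 - 1))) * ‖z‖ ^ 2
        + ⟪(a / (a ^ 2 - 1)) • x + (b / (b ^ 2 - 1)) • y, z⟫)
        + (-‖x‖ ^ 2 / (2 * (a ^ 2 - 1)) - ‖y‖ ^ 2 / (2 * (b ^ 2 - 1))) := by
  have ha' : a ^ 2 - 1 ≠ 0 := sub_ne_zero.2 ha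
  have hb' : b ^ 2 - 1 ≠ 0 := sub_ne_zero.2 hb
  rw [mehlerExponent, mehlerExponent, inner_add_left, real_inner_smul_left,
    real_inner_smul_left, real_inner_comm y z]
  field_simp
  ring

theorem sq_norm_div_add_eq_mehlerExponent_mul {a b : ℝ}
    (ha : a ^ 2 ≠ 1) (hb : b ^ 2 ≠ 1) (hab : a ^ 2 * b ^ 2 ≠ 1) (x y : V) :
    ‖(a / (a ^ 2 - 1)) • x + (b / (b ^ 2 - 1)) • y‖ ^ 2
        / (4 * ((a ^ 2 * b ^ 2 - 1) / (2 * (a ^ 2 - 1) * (b ^ 2 - 1))))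
        + (-‖x‖ ^ 2 / (2 * (a ^ 2 - 1)) - ‖y‖ ^ 2 / (2 * (b ^ 2 - 1))) =
      mehlerExponent (a * b) x y := by
  have ha' : a ^ 2 - 1 ≠ 0 := sub_ne_zero.2 ha
  have hb' : b ^ 2 - 1 ≠ 0 := sub_ne_zero.2 hb
  have hab' : a ^ 2 * b ^ 2 - 1 ≠ 0 := sub_ne_zero.2 hab
  rw [mehlerExponent, norm_add_sq_real, norm_smul, norm_smul, real_inner_smul_left,
    real_inner_smul_right, mul_pow, mul_pow, Real.norm_eq_abs, Real.norm_eq_abs, sq_abs, sq_abs]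
  field_simp
  ring

theorem integral_exp_neg_sq_norm_div_two_add_mehlerExponent_add_mehlerExponent
    [FiniteDimensional ℝ V] [MeasurableSpace V] [BorelSpace V] {a b : ℝ}
    (ha : 1 < a ^ 2) (hb : 1 < b ^ 2) (x y : V) :
    ∫ z, rexp (-‖z‖ ^ 2 / 2 + mehlerExponent a x z + mehlerExponent b z y) =
      (2 * π * (a ^ 2 - 1) * (b ^ 2 - 1) / (a ^ 2 * b ^ 2 - 1)) ^ (Module.finrank ℝ V / 2 : ℝ)
        * rexp (mehlerExponent (a * b) x y) := by
  have hab : 1 < a ^ 2 * b ^ 2 := one_lt_mul_of_lt_of_le ha hb.le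
  have hβ : 0 < (a ^ 2 * b ^ 2 - 1) / (2 * (a ^ 2 - 1) * (b ^ 2 - 1)) := by
    have := sub_pos.2 ha; have := sub_pos.2 hb; have := sub_pos.2 hab; positivity
  simp_rw [neg_sq_norm_div_two_add_mehlerExponent_add_mehlerExponent ha.ne' hb.ne',
    exp_add (_ + _)]
  rw [integral_mul_const, integral_rexp_neg_mul_sq_norm_add_inner hβ, mul_assoc, ← exp_add,
    sq_norm_div_add_eq_mehlerExponent_mul ha.ne' hb.ne' hab.ne']
  congr 2
  field_simp

end InnerProductSpace

theorem integral_gaussianMeasure (n : ℕ) (f : Euc n → ℝ) :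
    ∫ z, f z ∂gaussianMeasure n =
      ∫ z, (2 * π) ^ (-(n : ℝ) / 2) * rexp (-‖z‖ ^ 2 / 2) * f z := by
  rw [gaussianMeasure, integral_withDensity_eq_integral_toReal_smul (by fun_prop)
    (ae_of_all _ fun _ => ENNReal.ofReal_lt_top)]
  simp only [smul_eq_mul]
  congr with z
  rw [ENNReal.toReal_ofReal (by positivity)]

theorem mehler_normalization_mul {a b : ℝ} (ha : 1 < a ^ 2) (hb : 1 < b ^ 2) (r : ℝ) :
    (2 * π) ^ (-r) * (1 - (a ^ 2)⁻¹) ^ (-r) * (1 - (b ^ 2)⁻¹) ^ (-r)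
        * (2 * π * (a ^ 2 - 1) * (b ^ 2 - 1) / (a ^ 2 * b ^ 2 - 1)) ^ r =
      (1 - ((a * b) ^ 2)⁻¹) ^ (-r) := by
  have hab : 1 < (a * b) ^ 2 := by rw [mul_pow]; exact one_lt_mul_of_lt_of_le ha hb.le
  have one_sub_inv_pos {c : ℝ} (hc : 1 < c) : 0 < 1 - c⁻¹ :=
    sub_pos.2 (inv_lt_one_of_one_lt₀ hc)
  have hA := one_sub_inv_pos ha
  have hB := one_sub_inv_pos hb
  have hAB := one_sub_inv_pos hab
  have hX : 0 < 2 * π * (1 - (a ^ 2)⁻¹) * (1 - (b ^ 2)⁻¹) := by positivity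
  have key : 2 * π * (a ^ 2 - 1) * (b ^ 2 - 1) / (a ^ 2 * b ^ 2 - 1) =
      2 * π * (1 - (a ^ 2)⁻¹) * (1 - (b ^ 2)⁻¹) / (1 - ((a * b) ^ 2)⁻¹) := by
    have : a ^ 2 * b ^ 2 - 1 ≠ 0 := by rw [← mul_pow]; exact (sub_pos.2 hab).ne'
    have : a ≠ 0 := by rintro rfl; norm_num at ha
    have : b ≠ 0 := by rintro rfl; norm_num at hb
    field_simp
  rw [key, ← mul_rpow (by positivity) hA.le, ← mul_rpow (by positivity) hB.le,
    div_rpow hX.le hAB.le, rpow_neg hX.le, rpow_neg hAB.le, div_eq_mul_inv,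
    inv_mul_cancel_left₀ (rpow_pos_of_pos hX r).ne']

noncomputable def mehlerKernel (n : ℕ) (a : ℝ) (x z : Euc n) : ℝ :=
  (1 - (a ^ 2)⁻¹) ^ (-(n : ℝ) / 2) * rexp (mehlerExponent a x z)

theorem pker_eq_mehlerKernel (n : ℕ) (t : ℝ) (x z : Euc n) :
    pker n t x z = mehlerKernel n (rexp t) x z := by
  have h : rexp (2 * t) = rexp t ^ 2 := by rw [← exp_nat_mul]; norm_num
  rw [pker, mehlerKernel, mehlerExponent, neg_mul, exp_neg, h]

theorem integral_mehlerKernel_mul_mehlerKernel (n : ℕ) {a b : ℝ} (ha : 1 < a ^ 2)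
    (hb : 1 < b ^ 2) (x y : Euc n) :
    ∫ z, mehlerKernel n a x z * mehlerKernel n b z y ∂gaussianMeasure n =
      mehlerKernel n (a * b) x y := by
  have integrand (z : Euc n) :
      (2 * π) ^ (-(n : ℝ) / 2) * rexp (-‖z‖ ^ 2 / 2)
          * (mehlerKernel n a x z * mehlerKernel n b z y) =
        (2 * π) ^ (-(n : ℝ) / 2) * (1 - (a ^ 2)⁻¹) ^ (-(n : ℝ) / 2)
            * (1 - (b ^ 2)⁻¹) ^ (-(n : ℝ) / 2)
            * rexp (-‖z‖ ^ 2 / 2 + mehlerExponent a x z + mehlerExponent b z y) := by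
    rw [mehlerKernel, mehlerKernel, exp_add, exp_add]
    ring
  simp_rw [integral_gaussianMeasure, integrand]
  rw [integral_const_mul,
    integral_exp_neg_sq_norm_div_two_add_mehlerExponent_add_mehlerExponent ha hb,
    finrank_euclideanSpace_fin, ← mul_assoc, neg_div, mehler_normalization_mul ha hb,
    mehlerKernel, neg_div]

theorem mehler_chapman_kolmogorov (n : ℕ) (s t : ℝ) (hs : 0 < s) (ht : 0 < t)
    (x y : Euc n) :
    ∫ z, pker n s x z * pker n t z y ∂(gaussianMeasure n) = pker n (s + t) x y := by
  have one_lt_exp_sq {u : ℝ} (hu : 0 < u) : 1 < rexp u ^ 2 :=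
    one_lt_pow₀ (one_lt_exp_iff.2 hu) two_ne_zero
  simp_rw [pker_eq_mehlerKernel, exp_add]
  exact integral_mehlerKernel_mul_mehlerKernel n (one_lt_exp_sq hs) (one_lt_exp_sq ht) x y
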